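/- Finite Representation Theorem in polynomial form, for sets of desirable gambles: a set of desirable gambles D ⊆ L(X^N) is exchangeable if and only if there exists a (necessarily unique) set D̃ ⊆ V_N(Σ_X) such that D = {f ∈ L(X^N) : Mn_N(f) ∈ D̃}. In that case D̃ = Mn_N(D), and D is coherent if and only if D̃ is coherent with respect to the Bernstein ordering (i.e., 0 ∉ D̃, every h that is a positive linear combination of Bernstein gambles B_m belongs to D̃, and D̃ is closed under multiplication by positive reals and under addition). -/

import Mathlib

namespace ExchPaper

/-- The lift of a permutation `σ` of `{1,…,N}` to gambles on `X^N`: `(σ^t f)(x) = f(σx)`. -/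
def lift {X : Type*} (N : ℕ) (σ : Equiv.Perm (Fin N)) (f : (Fin N → X) → ℝ) :
    (Fin N → X) → ℝ :=
  fun x => f (fun k => x (σ k))
/-- `I_N`: the linear span of `{f − σ^t f : f ∈ L(X^N), σ a permutation of {1,…,N}}`. -/
def IN (X : Type*) (N : ℕ) : Submodule ℝ ((Fin N → X) → ℝ) :=
  Submodule.span ℝ
    {g | ∃ (f : (Fin N → X) → ℝ) (σ : Equiv.Perm (Fin N)), g = f - lift N σ f}
/-- The count vector `T(x)` of a sequence `x ∈ X^N`: `T(x)_z = #{k : x_k = z}`. -/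
def countVec {X : Type*} [Fintype X] [DecidableEq X] (N : ℕ) (x : Fin N → X) : X → ℕ :=
  fun z => (Finset.univ.filter (fun k => x k = z)).card

/-- The set of count vectors `C_N = {m ∈ ℕ^X : Σ_z m_z = N}`. -/
def CNset (X : Type*) [Fintype X] (N : ℕ) : Set (X → ℕ) :=
  {m | ∑ z, m z = N}

lemma CNset_finite (X : Type*) [Fintype X] (N : ℕ) : (CNset X N).Finite := by
  apply Set.Finite.subset (Set.Finite.pi (fun _ : X => Set.finite_Iic N))
  intro m hm
  simp only [Set.mem_pi, Set.mem_univ, Set.mem_Iic, forall_true_left]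
  intro z
  calc m z ≤ ∑ w, m w := Finset.single_le_sum (fun i _ => Nat.zero_le (m i)) (Finset.mem_univ z)
  _ = N := hm

noncomputable instance (X : Type*) [Fintype X] (N : ℕ) : Fintype (CNset X N) :=
  (CNset_finite X N).fintype

/-- The permutation invariant atom `A_m = {x ∈ X^N : T(x) = m}`. -/
def atom {X : Type*} [Fintype X] [DecidableEq X] (N : ℕ) (m : X → ℕ) : Finset (Fin N → X) :=
  Finset.univ.filter (fun x => countVec N x = m)

/-- `Hy_N(f)(m) = (1/|A_m|) Σ_{y ∈ A_m} f(y)`. -/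
noncomputable def Hy {X : Type*} [Fintype X] [DecidableEq X] (N : ℕ)
    (f : (Fin N → X) → ℝ) (m : X → ℕ) : ℝ :=
  (1 / ((atom N m).card : ℝ)) * ∑ y ∈ atom N m, f y

/-- `Hy_N(f)` as a gamble on `C_N`. -/
noncomputable def HyFun {X : Type*} [Fintype X] [DecidableEq X] (N : ℕ)
    (f : (Fin N → X) → ℝ) : CNset X N → ℝ :=
  fun m => Hy N f m.1
/-- The `X`-simplex `Σ_X = {θ ∈ ℝ^X : θ ≥ 0, Σ_z θ_z = 1}`. -/
def Splx (X : Type*) [Fintype X] : Set (X → ℝ) :=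
  {θ | (∀ z, 0 ≤ θ z) ∧ ∑ z, θ z = 1}

/-- The multinomial coefficient `binom(N,m) = N!/∏_z m_z!`. -/
noncomputable def binomR {X : Type*} [Fintype X] (N : ℕ) (m : X → ℕ) : ℝ :=
  (N.factorial : ℝ) / ∏ z, ((m z).factorial : ℝ)

/-- The Bernstein gamble `B_m(θ) = binom(N,m) ∏_z θ_z^{m_z}` on the simplex `Σ_X`. -/
noncomputable def bern {X : Type*} [Fintype X] (N : ℕ) (m : X → ℕ) : Splx X → ℝ :=
  fun θ => binomR N m * ∏ z, (θ.1 z) ^ (m z)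

/-- `V_N(Σ_X)`: the linear space of gambles on `Σ_X` that are restrictions to `Σ_X` of
polynomials on `ℝ^X` with a representation of degree at most `N`. -/
def VN (X : Type*) [Fintype X] (N : ℕ) : Set (Splx X → ℝ) :=
  {h | ∃ p : MvPolynomial X ℝ, p.totalDegree ≤ N ∧ ∀ θ : Splx X, h θ = MvPolynomial.eval θ.1 p}
/-- The positive hull `Posi(S)`: all positive finite linear combinations
`Σ_{k=1}^n λ_k u_k` with `n ≥ 1`, `λ_k > 0` and `u_k ∈ S`. -/
def Posi {W : Type*} [AddCommMonoid W] [Module ℝ W] (S : Set W) : Set W :=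
  {v | ∃ (n : ℕ) (l : Fin n → ℝ) (u : Fin n → W), 0 < n ∧ (∀ k, 0 < l k) ∧
    (∀ k, u k ∈ S) ∧ v = ∑ k, l k • u k}
/-- Coherence of a set of desirable gambles `D` on a possibility space `α`: `0 ∉ D`; every
nonzero nonnegative gamble belongs to `D`; `D` is closed under multiplication by positive
reals and under addition. -/
def CohDes {α : Type*} (D : Set (α → ℝ)) : Prop :=
  (0 : α → ℝ) ∉ D ∧
  (∀ f : α → ℝ, (∀ x, 0 ≤ f x) → f ≠ 0 → f ∈ D) ∧
  (∀ f ∈ D, ∀ l : ℝ, 0 < l → l • f ∈ D) ∧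
  (∀ f ∈ D, ∀ g ∈ D, f + g ∈ D)

/-- `CoMn_N : L(C_N) → V_N(Σ_X)`, `g ↦ Σ_{m ∈ C_N} g(m) B_m`. -/
noncomputable def CoMn {X : Type*} [Fintype X] (N : ℕ) (g : CNset X N → ℝ) : Splx X → ℝ :=
  fun θ => ∑ m : CNset X N, g m * bern N m.1 θ

/-- `Mn_N := CoMn_N ∘ Hy_N`. -/
noncomputable def Mn {X : Type*} [Fintype X] [DecidableEq X] (N : ℕ)
    (f : (Fin N → X) → ℝ) : Splx X → ℝ :=
  CoMn N (HyFun N f)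

/-- Coherence of a set of desirable gambles `D̃ ⊆ V_N(Σ_X)` with respect to the Bernstein
ordering: `0 ∉ D̃`; every positive linear combination of Bernstein gambles belongs to `D̃`;
`D̃` is closed under multiplication by positive reals and under addition. -/
def CohDesBern {X : Type*} [Fintype X] (N : ℕ) (Dt : Set (Splx X → ℝ)) : Prop :=
  (0 : Splx X → ℝ) ∉ Dt ∧
  Posi {h | ∃ m ∈ CNset X N, h = bern N m} ⊆ Dt ∧
  (∀ h ∈ Dt, ∀ l : ℝ, 0 < l → l • h ∈ Dt) ∧
  (∀ h ∈ Dt, ∀ h' ∈ Dt, h + h' ∈ Dt)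

/-!
`Mn_N` is a linear map with kernel `I_N` and range `V_N(Σ_X)`; everything else is linear algebra
of preimages under such a map. The kernel contains `I_N` since `Hy_N` averages over permutation
orbits. Conversely `f` differs from its symmetrization by an element of `I_N`, the symmetrization
is `Hy_N(f) ∘ T`, and `CoMn_N` is injective. For the range, on the simplex a monomial of degree
`d < N` is the sum of the monomials of degree `d + 1` obtained by multiplying it with one `θ_z`,
and the monomials of degree `N` are multiples of `B_m = Mn_N(1_{A_m})`. Coherence transfers
because `Mn_N` maps the nonzero nonnegative gambles exactly onto the positive hull of the `B_m`.
-/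

section PositiveHull

variable {W : Type*} [AddCommMonoid W] [Module ℝ W] {S : Set W}

lemma sum_smul_mem_Posi {ι : Type*} {s : Finset ι} (hs : s.Nonempty) {c : ι → ℝ}
    (hc : ∀ i ∈ s, 0 < c i) {u : ι → W} (hu : ∀ i ∈ s, u i ∈ S) :
    ∑ i ∈ s, c i • u i ∈ Posi S := by
  let e := s.equivFin.symm
  refine ⟨s.card, fun k => c (e k), fun k => u (e k), hs.card_pos, fun k => hc _ (e k).2,
    fun k => hu _ (e k).2, ?_⟩
  rw [← s.sum_coe_sort]
  exact (e.sum_comp fun i => c i • u i).symm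

lemma Posi_subset_of_subset {C : Set W} (hS : S ⊆ C)
    (hsmul : ∀ v ∈ C, ∀ l : ℝ, 0 < l → l • v ∈ C)
    (hadd : ∀ v ∈ C, ∀ w ∈ C, v + w ∈ C) : Posi S ⊆ C := by
  rintro _ ⟨n, l, u, hn, hl, hu, rfl⟩
  obtain ⟨n, rfl⟩ := Nat.exists_eq_add_one_of_ne_zero hn.ne'
  induction n with
  | zero => simpa using hsmul _ (hS (hu 0)) _ (hl 0)
  | succ n ih =>
    rw [Fin.sum_univ_castSucc]
    exact hadd _ (ih _ _ n.succ_pos (fun k => hl _) fun k => hu _) _ (hsmul _ (hS (hu _)) _ (hl _))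

end PositiveHull

section Gambles

variable {α : Type*}

def posGambles (α : Type*) : Set (α → ℝ) :=
  {f | (∀ x, 0 ≤ f x) ∧ f ≠ 0}

lemma smul_mem_posGambles {f : α → ℝ} (hf : f ∈ posGambles α) {l : ℝ} (hl : 0 < l) :
    l • f ∈ posGambles α :=
  ⟨fun x => mul_nonneg hl.le (hf.1 x), smul_ne_zero hl.ne' hf.2⟩

lemma add_mem_posGambles {f g : α → ℝ} (hf : f ∈ posGambles α)
    (hg : g ∈ posGambles α) : f + g ∈ posGambles α := by
  refine ⟨fun x => add_nonneg (hf.1 x) (hg.1 x), fun hfg => hf.2 (funext fun x => ?_)⟩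
  have := congrFun hfg x
  simp only [Pi.add_apply, Pi.zero_apply] at this ⊢
  linarith [hf.1 x, hg.1 x]

lemma CohDes_preimage_iff {W : Type*} [AddCommGroup W] [Module ℝ W]
    (T : (α → ℝ) →ₗ[ℝ] W) {Dt : Set W} (hDt : Dt ⊆ Set.range T) :
    CohDes (T ⁻¹' Dt) ↔ (0 : W) ∉ Dt ∧ T '' posGambles α ⊆ Dt ∧
      (∀ h ∈ Dt, ∀ l : ℝ, 0 < l → l • h ∈ Dt) ∧
      (∀ h ∈ Dt, ∀ h' ∈ Dt, h + h' ∈ Dt) := by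
  refine and_congr (by simp) (and_congr ?_ (and_congr ⟨fun H h hh l hl => ?_, ?_⟩
    ⟨fun H h hh h' hh' => ?_, ?_⟩))
  · rw [Set.image_subset_iff]
    exact ⟨fun H f hf => H f hf.1 hf.2, fun H f h0 hne => H ⟨h0, hne⟩⟩
  · obtain ⟨f, rfl⟩ := hDt hh
    simpa using H f hh l hl
  · intro H f hf l hl
    simpa using H _ hf l hl
  · obtain ⟨f, rfl⟩ := hDt hh
    obtain ⟨f', rfl⟩ := hDt hh'
    simpa using H f hh f' hh'
  · intro H f hf f' hf'
    simpa using H _ hf _ hf'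

end Gambles

lemma add_ker_subset_iff_exists_preimage {R V W : Type*} [Ring R] [AddCommGroup V] [Module R V]
    [AddCommGroup W] [Module R W] (T : V →ₗ[R] W) (D : Set V) :
    (∀ f ∈ D, ∀ h ∈ LinearMap.ker T, f + h ∈ D) ↔
      ∃ Dt ⊆ Set.range T, D = T ⁻¹' Dt := by
  constructor
  · refine fun H => ⟨T '' D, Set.image_subset_range _ _, ?_⟩
    refine (Set.subset_preimage_image _ _).antisymm fun f ⟨g, hg, hgf⟩ => ?_
    simpa using H g hg (f - g) (by simp [hgf])
  · rintro ⟨Dt, -, rfl⟩ f hf h hh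
    simpa [LinearMap.mem_ker.1 hh] using hf

section Atoms

variable {X : Type*} [Fintype X] [DecidableEq X] {N : ℕ}

lemma countVec_mem (x : Fin N → X) : countVec N x ∈ CNset X N := by
  have := Finset.card_eq_sum_card_fiberwise (f := x) (s := .univ) (t := .univ)
    (fun _ _ => Finset.mem_univ _)
  simpa [CNset, countVec] using this.symm

lemma countVec_comp_perm (σ : Equiv.Perm (Fin N)) (x : Fin N → X) :
    countVec N (fun k => x (σ k)) = countVec N x := by
  funext z
  exact Finset.card_nbij (fun k => σ k) (fun k hk => by simpa using hk)
    (fun _ _ _ _ h => σ.injective h) (fun k hk => ⟨σ.symm k, by simpa using hk, by simp⟩)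

lemma mem_atom_iff {m : X → ℕ} {y : Fin N → X} : y ∈ atom N m ↔ countVec N y = m := by
  simp [atom]

lemma exists_perm_of_countVec_eq {x y : Fin N → X} (h : countVec N y = countVec N x) :
    ∃ σ : Equiv.Perm (Fin N), y = fun k => x (σ k) := by
  have hcard (z : X) :
      Fintype.card {k // y k = z} = Fintype.card {k // x k = z} := by
    simpa only [countVec, Fintype.card_subtype] using congrFun h z
  refine ⟨Equiv.ofFiberEquiv fun z => Fintype.equivOfCardEq (hcard z), funext fun k => ?_⟩
  exact (Equiv.ofFiberEquiv_map _ k).symm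

lemma atom_nonempty {m : X → ℕ} (hm : m ∈ CNset X N) : (atom N m).Nonempty := by
  have hc : Fintype.card (Σ z : X, Fin (m z)) = N := by simpa [CNset] using hm
  let e := (Fintype.equivFinOfCardEq hc).symm
  refine ⟨fun k => (e k).1, mem_atom_iff.2 (funext fun z => ?_)⟩
  have hfib : {k : Fin N // (e k).1 = z} ≃ Fin (m z) :=
    (e.subtypeEquiv fun _ => Iff.rfl).trans (Equiv.sigmaSubtype z)
  simpa [countVec, Fintype.card_subtype] using Fintype.card_congr hfib

lemma Hy_lift (σ : Equiv.Perm (Fin N)) (f : (Fin N → X) → ℝ) (m : X → ℕ) :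
    Hy N (lift N σ f) m = Hy N f m := by
  unfold Hy lift
  congr 1
  refine Finset.sum_nbij' (fun y k => y (σ k)) (fun y k => y (σ.symm k)) ?_ ?_ ?_ ?_ ?_
  all_goals simp [mem_atom_iff, countVec_comp_perm]

lemma Hy_eq_of_mem_atom {g : (Fin N → X) → ℝ} {m : X → ℕ} {x : Fin N → X}
    (hx : x ∈ atom N m) (hg : ∀ y ∈ atom N m, g y = g x) : Hy N g m = g x := by
  have hcard : ((atom N m).card : ℝ) ≠ 0 := Nat.cast_ne_zero.2 (Finset.card_ne_zero_of_mem hx)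
  rw [Hy, Finset.sum_congr rfl hg, Finset.sum_const, nsmul_eq_mul]
  field_simp

end Atoms

section Symmetrization

variable {X : Type*} {N : ℕ}

noncomputable def symmetrize (f : (Fin N → X) → ℝ) : (Fin N → X) → ℝ :=
  (Fintype.card (Equiv.Perm (Fin N)) : ℝ)⁻¹ • ∑ σ, lift N σ f

lemma sub_symmetrize_mem_IN (f : (Fin N → X) → ℝ) : f - symmetrize f ∈ IN X N := by
  have hf :
      f = (Fintype.card (Equiv.Perm (Fin N)) : ℝ)⁻¹ • ∑ _σ : Equiv.Perm (Fin N), f := by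
    rw [Finset.sum_const, Finset.card_univ, ← Nat.cast_smul_eq_nsmul ℝ, smul_smul,
      inv_mul_cancel₀ (by positivity), one_smul]
  rw [symmetrize, hf, ← smul_sub, ← Finset.sum_sub_distrib, ← hf]
  exact Submodule.smul_mem _ _
    (Submodule.sum_mem _ fun σ _ => Submodule.subset_span ⟨f, σ, rfl⟩)

lemma symmetrize_comp_perm (f : (Fin N → X) → ℝ) (τ : Equiv.Perm (Fin N)) (x : Fin N → X) :
    symmetrize f (fun k => x (τ k)) = symmetrize f x := by
  simp only [symmetrize, Pi.smul_apply, Finset.sum_apply, lift]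
  congr 1
  exact Equiv.sum_comp (Equiv.mulLeft τ) (fun σ => f fun k => x (σ k))

end Symmetrization

section Hypergeometric

variable (X : Type*) [Fintype X] [DecidableEq X] (N : ℕ)

noncomputable def HyLin : ((Fin N → X) → ℝ) →ₗ[ℝ] (CNset X N → ℝ) where
  toFun := HyFun N
  map_add' f g := by
    funext m
    simp [HyFun, Hy, Finset.sum_add_distrib, mul_add]
  map_smul' c f := by
    funext m
    simp only [HyFun, Hy, Pi.smul_apply, smul_eq_mul, RingHom.id_apply, ← Finset.mul_sum]
    ring

lemma IN_le_ker_HyLin : IN X N ≤ LinearMap.ker (HyLin X N) := by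
  refine Submodule.span_le.2 ?_
  rintro _ ⟨f, σ, rfl⟩
  rw [SetLike.mem_coe, LinearMap.mem_ker, map_sub, sub_eq_zero]
  exact funext fun m => (Hy_lift σ f m).symm

variable {X N}

lemma symmetrize_eq_Hy (f : (Fin N → X) → ℝ) (x : Fin N → X) :
    symmetrize f x = Hy N f (countVec N x) := by
  have hHy : HyLin X N (symmetrize f) = HyLin X N f := by
    rw [← sub_eq_zero, ← map_sub, ← LinearMap.mem_ker, ← neg_mem_iff, neg_sub]
    exact IN_le_ker_HyLin X N (sub_symmetrize_mem_IN f)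
  have hx : x ∈ atom N (countVec N x) := mem_atom_iff.2 rfl
  calc symmetrize f x = Hy N (symmetrize f) (countVec N x) := by
        refine (Hy_eq_of_mem_atom hx fun y hy => ?_).symm
        obtain ⟨σ, rfl⟩ := exists_perm_of_countVec_eq (mem_atom_iff.1 hy)
        exact symmetrize_comp_perm f σ x
    _ = Hy N f (countVec N x) := congrFun hHy ⟨_, countVec_mem x⟩

variable (X N)

lemma ker_HyLin : LinearMap.ker (HyLin X N) = IN X N := by
  refine le_antisymm (fun f hf => ?_) (IN_le_ker_HyLin X N)
  have hsymm : symmetrize f = 0 := funext fun x => by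
    rw [symmetrize_eq_Hy]
    exact congrFun (LinearMap.mem_ker.1 hf) ⟨_, countVec_mem x⟩
  simpa [hsymm] using sub_symmetrize_mem_IN f

end Hypergeometric

section Bernstein

variable {X : Type*} [Fintype X] {N : ℕ}

lemma binomR_pos (m : X → ℕ) : 0 < binomR N m :=
  div_pos (by positivity) (Finset.prod_pos fun z _ => by positivity)

noncomputable def bernPoly (g : CNset X N → ℝ) : MvPolynomial X ℝ :=
  ∑ m : CNset X N, MvPolynomial.monomial (Finsupp.equivFunOnFinite.symm m.1) (g m * binomR N m.1)

lemma eval_bernPoly (g : CNset X N → ℝ) (x : X → ℝ) :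
    MvPolynomial.eval x (bernPoly g) =
      ∑ m : CNset X N, g m * binomR N m.1 * ∏ z, x z ^ m.1 z := by
  simp [bernPoly, MvPolynomial.eval_monomial, Finsupp.prod_fintype]

lemma CoMn_eq_eval_bernPoly (g : CNset X N → ℝ) (θ : Splx X) :
    CoMn N g θ = MvPolynomial.eval θ.1 (bernPoly g) := by
  simp [eval_bernPoly, CoMn, bern, mul_assoc]

lemma totalDegree_bernPoly_le (g : CNset X N → ℝ) : (bernPoly g).totalDegree ≤ N := by
  refine MvPolynomial.totalDegree_finsetSum_le fun m _ => ?_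
  refine (MvPolynomial.totalDegree_monomial_le _ _).trans_eq ?_
  rw [Finsupp.sum_fintype _ _ fun _ => rfl]
  exact m.2

lemma coeff_bernPoly (g : CNset X N → ℝ) (m : CNset X N) :
    MvPolynomial.coeff (Finsupp.equivFunOnFinite.symm m.1) (bernPoly g) = g m * binomR N m.1 := by
  classical
  rw [bernPoly, MvPolynomial.coeff_sum, Finset.sum_eq_single m]
  · simp
  · intro m' _ hm'
    rw [MvPolynomial.coeff_monomial, if_neg]
    exact fun h => hm' (Subtype.ext (Finsupp.equivFunOnFinite.symm.injective h))
  · simp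

lemma eval_smul_bernPoly (g : CNset X N → ℝ) (c : ℝ) (x : X → ℝ) :
    MvPolynomial.eval (c • x) (bernPoly g) = c ^ N * MvPolynomial.eval x (bernPoly g) := by
  simp only [eval_bernPoly, Finset.mul_sum, Pi.smul_apply, smul_eq_mul, mul_pow,
    Finset.prod_mul_distrib, Finset.prod_pow_eq_pow_sum]
  refine Finset.sum_congr rfl fun m _ => ?_
  rw [show ∑ z, m.1 z = N from m.2]
  ring

lemma inv_sum_smul_mem_Splx [Nonempty X] {x : X → ℝ} (hx : ∀ z, 0 < x z) :
    (∑ z, x z)⁻¹ • x ∈ Splx X := by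
  have hsum : 0 < ∑ z, x z := Finset.sum_pos (fun z _ => hx z) Finset.univ_nonempty
  refine ⟨fun z => by simpa using mul_nonneg (inv_nonneg.2 hsum.le) (hx z).le, ?_⟩
  simp [← Finset.mul_sum, hsum.ne']

/-- A form of degree `N` vanishing on the simplex vanishes on the open positive orthant, hence
everywhere. -/
lemma bernPoly_eq_zero [Nonempty X] {g : CNset X N → ℝ} (hg : CoMn N g = 0) :
    bernPoly g = 0 := by
  refine MvPolynomial.funext_set (fun _ => Set.Ioi 0) (fun _ => Set.Ioi_infinite 0) fun x hx => ?_
  have hpos : ∀ z, 0 < x z := fun z => hx z (Set.mem_univ z)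
  set s := ∑ z, x z
  have hs : s ≠ 0 := (Finset.sum_pos (fun z _ => hpos z) Finset.univ_nonempty).ne'
  have hθ := inv_sum_smul_mem_Splx hpos
  calc MvPolynomial.eval x (bernPoly g) = MvPolynomial.eval (s • s⁻¹ • x) (bernPoly g) := by
        rw [smul_inv_smul₀ hs]
    _ = s ^ N * CoMn N g ⟨_, hθ⟩ := by rw [eval_smul_bernPoly, CoMn_eq_eval_bernPoly]
    _ = MvPolynomial.eval x 0 := by simp [hg]

lemma CoMn_eq_zero [Nonempty X] {g : CNset X N → ℝ} (hg : CoMn N g = 0) : g = 0 := by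
  funext m
  have hcoeff := coeff_bernPoly g m
  rw [bernPoly_eq_zero hg, MvPolynomial.coeff_zero, eq_comm] at hcoeff
  exact (mul_eq_zero.1 hcoeff).resolve_right (binomR_pos m.1).ne'

end Bernstein

section Multinomial

variable (X : Type*) [Fintype X] [DecidableEq X] (N : ℕ)

noncomputable def CoMnLin : (CNset X N → ℝ) →ₗ[ℝ] (Splx X → ℝ) where
  toFun := CoMn N
  map_add' g g' := by
    funext θ
    simp [CoMn, add_mul, Finset.sum_add_distrib]
  map_smul' c g := by
    funext θ
    simp [CoMn, Finset.mul_sum, mul_assoc]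

noncomputable def MnLin : ((Fin N → X) → ℝ) →ₗ[ℝ] (Splx X → ℝ) :=
  (CoMnLin X N).comp (HyLin X N)

lemma coe_MnLin : ⇑(MnLin X N) = Mn N := rfl

lemma ker_MnLin [Nonempty X] : LinearMap.ker (MnLin X N) = IN X N := by
  rw [MnLin, LinearMap.ker_comp_of_ker_eq_bot _ (LinearMap.ker_eq_bot'.2 fun _ => CoMn_eq_zero),
    ker_HyLin]

variable {X N}

lemma Hy_indicator_atom {m m' : X → ℕ} (hm : m ∈ CNset X N) :
    Hy N (Set.indicator {x | countVec N x = m'} 1) m = if m = m' then 1 else 0 := by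
  obtain ⟨x, hx⟩ := atom_nonempty hm
  rw [Hy_eq_of_mem_atom hx fun y hy => by
    simp [Set.indicator_apply, mem_atom_iff.1 hy, mem_atom_iff.1 hx]]
  simp [Set.indicator_apply, mem_atom_iff.1 hx]

lemma Mn_indicator_atom {m : X → ℕ} (hm : m ∈ CNset X N) :
    Mn N (Set.indicator {x | countVec N x = m} 1) = bern N m := by
  have hHy : HyFun N (Set.indicator {x | countVec N x = m} 1) = Pi.single ⟨m, hm⟩ 1 := by
    funext m'
    simp [HyFun, Hy_indicator_atom m'.2, Pi.single_apply, Subtype.ext_iff]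
  funext θ
  simp [Mn, hHy, CoMn, Pi.single_apply]

lemma prod_pow_mem_range_MnLin {α : X → ℕ} (hα : ∑ z, α z ≤ N) :
    (fun θ : Splx X => ∏ z, θ.1 z ^ α z) ∈ LinearMap.range (MnLin X N) := by
  obtain ⟨k, hk⟩ := Nat.exists_eq_add_of_le hα
  induction k generalizing α with
  | zero =>
    refine ⟨(binomR N α)⁻¹ • Set.indicator {x | countVec N x = α} 1, ?_⟩
    rw [map_smul, coe_MnLin, Mn_indicator_atom (show ∑ z, α z = N by omega)]
    funext θ
    simp [bern, (binomR_pos α).ne']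
  | succ k ih =>
    have hsucc (z : X) : N = ∑ w, (α + Pi.single z 1 : X → ℕ) w + k := by
      simp [Finset.sum_add_distrib]
      omega
    have hsplit : (fun θ : Splx X => ∏ z, θ.1 z ^ α z)
        = ∑ z, fun θ : Splx X => ∏ w, θ.1 w ^ (α + Pi.single z 1 : X → ℕ) w := by
      funext θ
      have hsingle (z : X) : ∏ w, θ.1 w ^ (Pi.single z 1 : X → ℕ) w = θ.1 z := by
        rw [Finset.prod_eq_single z (fun w _ hw => by simp [hw]) (by simp)]
        simp
      simp only [Finset.sum_apply, Pi.add_apply, pow_add, Finset.prod_mul_distrib, hsingle,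
        ← Finset.mul_sum, θ.2.2, mul_one]
    rw [hsplit]
    exact Submodule.sum_mem _ fun z _ => ih (by have := hsucc z; omega) (hsucc z)

lemma range_MnLin : Set.range (MnLin X N) = VN X N := by
  refine Set.Subset.antisymm ?_ fun h ⟨p, hdeg, hp⟩ => ?_
  · rintro _ ⟨f, rfl⟩
    exact ⟨bernPoly (HyFun N f), totalDegree_bernPoly_le _, CoMn_eq_eval_bernPoly _⟩
  · have hh : h = ∑ d ∈ p.support,
        MvPolynomial.coeff d p • fun θ : Splx X => ∏ z, θ.1 z ^ d z := by
      funext θ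
      simp [hp θ, MvPolynomial.eval_eq']
    rw [← LinearMap.coe_range, SetLike.mem_coe, hh]
    refine Submodule.sum_mem _ fun d hd => Submodule.smul_mem _ _ ?_
    have hd : ∑ z, d z ≤ N := by
      simpa [Finsupp.sum_fintype] using (MvPolynomial.le_totalDegree hd).trans hdeg
    exact prod_pow_mem_range_MnLin hd

end Multinomial

section Positivity

variable {X : Type*} [Fintype X] [DecidableEq X] {N : ℕ}

lemma Hy_nonneg {f : (Fin N → X) → ℝ} (hf : ∀ x, 0 ≤ f x) (m : X → ℕ) :
    0 ≤ Hy N f m :=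
  mul_nonneg (by positivity) (Finset.sum_nonneg fun y _ => hf y)

lemma Hy_pos {f : (Fin N → X) → ℝ} (hf : ∀ x, 0 ≤ f x) {x : Fin N → X} (hx : 0 < f x) :
    0 < Hy N f (countVec N x) := by
  have hmem : x ∈ atom N (countVec N x) := mem_atom_iff.2 rfl
  refine mul_pos (by simpa using Finset.card_pos.2 ⟨x, hmem⟩) ?_
  exact hx.trans_le (Finset.single_le_sum (fun y _ => hf y) hmem)

lemma Mn_eq_sum_smul_bern (f : (Fin N → X) → ℝ) :
    Mn N f = ∑ m : CNset X N, HyFun N f m • bern N m.1 := by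
  funext θ
  simp [Mn, CoMn]

lemma Mn_mem_Posi_bern {f : (Fin N → X) → ℝ} (hf : f ∈ posGambles _) :
    Mn N f ∈ Posi {h | ∃ m ∈ CNset X N, h = bern N m} := by
  obtain ⟨x, hx⟩ := Function.ne_iff.1 hf.2
  have hxpos : 0 < HyFun N f ⟨_, countVec_mem x⟩ := Hy_pos hf.1 ((hf.1 x).lt_of_ne' hx)
  rw [Mn_eq_sum_smul_bern, ← Finset.sum_filter_of_ne fun m _ h => left_ne_zero_of_smul h]
  refine sum_smul_mem_Posi ⟨_, by simpa using hxpos.ne'⟩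
    (fun m hm => (Hy_nonneg hf.1 m.1).lt_of_ne' (Finset.mem_filter.1 hm).2)
    fun m _ => ⟨m.1, m.2, rfl⟩

lemma indicator_atom_mem_posGambles {m : X → ℕ} (hm : m ∈ CNset X N) :
    Set.indicator {x | countVec N x = m} 1 ∈ posGambles (Fin N → X) := by
  obtain ⟨x, hx⟩ := atom_nonempty hm
  refine ⟨Set.indicator_nonneg fun _ _ => zero_le_one, Function.ne_iff.2 ⟨x, ?_⟩⟩
  simp [mem_atom_iff.1 hx]

variable (X N)

lemma image_MnLin_posGambles :
    MnLin X N '' posGambles _ = Posi {h | ∃ m ∈ CNset X N, h = bern N m} := by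
  refine Set.Subset.antisymm (Set.image_subset_iff.2 fun f hf => Mn_mem_Posi_bern hf)
    (Posi_subset_of_subset ?_ ?_ ?_)
  · rintro _ ⟨m, hm, rfl⟩
    exact ⟨_, indicator_atom_mem_posGambles hm, Mn_indicator_atom hm⟩
  · rintro _ ⟨f, hf, rfl⟩ l hl
    exact ⟨l • f, smul_mem_posGambles hf hl, map_smul _ _ _⟩
  · rintro _ ⟨f, hf, rfl⟩ _ ⟨g, hg, rfl⟩
    exact ⟨f + g, add_mem_posGambles hf hg, map_add _ _ _⟩

end Positivity

theorem statement_14_general (X : Type*) [Fintype X] [DecidableEq X] [Nonempty X] (N : ℕ)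
    (D : Set ((Fin N → X) → ℝ)) :
    ((∀ f ∈ D, ∀ h ∈ IN X N, f + h ∈ D) ↔
      ∃ Dt : Set (Splx X → ℝ), Dt ⊆ VN X N ∧ D = {f | Mn N f ∈ Dt}) ∧
    (∀ Dt Dt' : Set (Splx X → ℝ), Dt ⊆ VN X N → Dt' ⊆ VN X N →
        D = {f | Mn N f ∈ Dt} → D = {f | Mn N f ∈ Dt'} → Dt = Dt') ∧
    (∀ Dt : Set (Splx X → ℝ), Dt ⊆ VN X N → D = {f | Mn N f ∈ Dt} →
        Dt = Mn N '' D ∧ (CohDes D ↔ CohDesBern N Dt)) := by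
  rw [← ker_MnLin, ← range_MnLin, ← coe_MnLin]
  have himage {Dt : Set (Splx X → ℝ)} (hDt : Dt ⊆ Set.range (MnLin X N))
      (hD : D = MnLin X N ⁻¹' Dt) : Dt = MnLin X N '' D := by
    rw [hD, Set.image_preimage_eq_of_subset hDt]
  refine ⟨add_ker_subset_iff_exists_preimage _ D,
    fun Dt Dt' hDt hDt' hD hD' => (himage hDt hD).trans (himage hDt' hD').symm,
    fun Dt hDt hD => ⟨himage hDt hD, ?_⟩⟩
  rw [hD, CohDesBern, ← image_MnLin_posGambles]
  exact CohDes_preimage_iff _ hDt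

/-- Finite Representation in polynomial form, sets of desirable gambles:
`D ⊆ L(X^N)` is exchangeable (i.e. `D + I_N ⊆ D`) iff there is a (necessarily unique) set
`D̃ ⊆ V_N(Σ_X)` with `D = {f : Mn_N(f) ∈ D̃}`; in that case `D̃ = Mn_N(D)`, and `D` is
coherent iff `D̃` is coherent with respect to the Bernstein ordering. -/
theorem statement_14 (X : Type*) [Fintype X] [DecidableEq X] [Nonempty X] (N : ℕ) (hN : 0 < N)
    (D : Set ((Fin N → X) → ℝ)) :
    ((∀ f ∈ D, ∀ h ∈ IN X N, f + h ∈ D) ↔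
      ∃ Dt : Set (Splx X → ℝ), Dt ⊆ VN X N ∧ D = {f | Mn N f ∈ Dt}) ∧
    (∀ Dt Dt' : Set (Splx X → ℝ), Dt ⊆ VN X N → Dt' ⊆ VN X N →
        D = {f | Mn N f ∈ Dt} → D = {f | Mn N f ∈ Dt'} → Dt = Dt') ∧
    (∀ Dt : Set (Splx X → ℝ), Dt ⊆ VN X N → D = {f | Mn N f ∈ Dt} →
        Dt = Mn N '' D ∧ (CohDes D ↔ CohDesBern N Dt)) :=
  statement_14_general X N D

end ExchPaper
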